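/- Let R be a commutative ring, n ≥ 3 a natural number, and s, t ∈ R. For all natural numbers p, q, k, m there exist natural numbers l and n′, depending only on n, p, q, k, m and not on the ideals 𝔞, 𝔟, such that for all ideals 𝔞, 𝔟 of R, all a ∈ 𝔞, b ∈ 𝔟, and all pairs of indices i ≠ j and i′ ≠ j′, the commutator [e_{ij}(F(t^l·a)·F(s)^{−k}), e_{i′j′}(F(s^{n′}·b)·F(t)^{−m})] lies in the subgroup ⁅E(n, s^p t^q R, s^p t^q 𝔞), E(n, s^p t^q R, s^p t^q 𝔟)⁆ of SL(n, R_{st}). (Type A_{n−1} instance of the paper's base-of-induction lemma of the relative commutator calculus; for type A the hypothesis 2 ∈ R* is not needed.) -/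

import Mathlib

open Matrix
open scoped commutatorElement

/-- `SL n R` : the special linear group of degree `n` over `R`,
the simply connected Chevalley group of type `A_{n-1}`. -/
abbrev SL (n : ℕ) (R : Type*) [CommRing R] := Matrix.SpecialLinearGroup (Fin n) R

/-- The elementary transvection `e_{ij}(a) = 1 + a·E_{ij}` as an element of `SL n R`. -/
def elemTransv {n : ℕ} {R : Type*} [CommRing R] (i j : Fin n) (h : i ≠ j) (a : R) :
    SL n R :=
  ⟨Matrix.transvection i j a, Matrix.det_transvection_of_ne i j h a⟩

/-- The set of elementary transvections with parameters in `S`. -/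
def transvSet (n : ℕ) {R : Type*} [CommRing R] (S : Set R) : Set (SL n R) :=
  { x | ∃ i j : Fin n, ∃ h : i ≠ j, ∃ a ∈ S, x = elemTransv i j h a }

/-- `E(n,S)` : the subgroup generated by elementary transvections with parameters in `S`. -/
def Esub (n : ℕ) {R : Type*} [CommRing R] (S : Set R) : Subgroup (SL n R) :=
  Subgroup.closure (transvSet n S)

/-- `E(n,T,S)` : the normal closure of `E(n,S)` in `E(n,T)`, i.e. the subgroup
generated by the conjugates of elementary generators of level `S` by elements
of `E(n,T)`. -/
def relESet (n : ℕ) {R : Type*} [CommRing R] (T S : Set R) : Subgroup (SL n R) :=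
  Subgroup.closure
    { x | ∃ g ∈ Esub n T, ∃ y ∈ transvSet n S, x = g * y * g⁻¹ }

/-- `E(n,R,I)` : the relative elementary subgroup, the normal closure of
`E(n,I)` in the absolute elementary subgroup `E(n,R)`. -/
def relE (n : ℕ) {R : Type*} [CommRing R] (I : Ideal R) : Subgroup (SL n R) :=
  relESet n (Set.univ : Set R) (I : Set R)

/-- The reduction homomorphism `SL(n,R) → SL(n,R/I)`. -/
def redMap (n : ℕ) {R : Type*} [CommRing R] (I : Ideal R) : SL n R →* SL n (R ⧸ I) :=
  Matrix.SpecialLinearGroup.map (Ideal.Quotient.mk I)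

/-- `SL(n,R,I)` : the principal congruence subgroup of level `I`. -/
def SLcong (n : ℕ) {R : Type*} [CommRing R] (I : Ideal R) : Subgroup (SL n R) :=
  (redMap n I).ker

/-- `C(n,R,I)` : the full congruence subgroup of level `I`. -/
def Ccong (n : ℕ) {R : Type*} [CommRing R] (I : Ideal R) : Subgroup (SL n R) :=
  Subgroup.comap (redMap n I) (Subgroup.center (SL n (R ⧸ I)))

/-- `s^p t^q 𝔞 = {F(s^p·t^q·c) : c ∈ S} ⊆ R_{st}`, where
`F : R → R_{st} = Localization.Away (s·t)` is the canonical map. -/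
def stMulSet {R : Type*} [CommRing R] (s t : R) (p q : ℕ) (S : Set R) :
    Set (Localization.Away (s * t)) :=
  { x | ∃ c ∈ S, x = algebraMap R (Localization.Away (s * t)) (s ^ p * t ^ q * c) }

/-!
Take `l = 3q + 2m` and `n' = 2k + 4p`. The commutator of two transvections that are not opposite
is trivial or a transvection with parameter in `s^{2p} t^{2q} 𝔞𝔟`, and through a third index
such a transvection is a commutator of generators of `E(n, s^p t^q 𝔞)` and `E(n, s^p t^q 𝔟)`.
For opposite ones `u = e_{ij}(α)` and `e_{ji}(β)`, write `e_{ji}(β) = [v, w]` with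
`v = e_{jg}(β₁)`, `β₁ ∈ s^{k+2p} t^q 𝔟`, the denominator `t^m` being pushed into `w = e_{gi}(β₂)`.
Expanding `[u, [v, w]]` gives commutators of such generators, conjugated only by `v` and
`[u, w]`, which lie in `E(n, s^p t^q R)` and so normalize the target subgroup.
-/

theorem commutatorElement_mul_right_of_commute {G : Type*} [Group G] {a b c : G}
    (h : Commute b c) : ⁅a, b * c⁆ = ⁅a, b⁆ * ⁅b * a * b⁻¹, c⁆ := by
  rw [h.eq]
  simp only [commutatorElement_def]
  group

namespace Subgroup

variable {G : Type*} [Group G]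

theorem mem_normalizer_commutator {H₁ H₂ : Subgroup G} {g : G} (h₁ : g ∈ normalizer H₁)
    (h₂ : g ∈ normalizer H₂) : g ∈ normalizer (⁅H₁, H₂⁆ : Subgroup G) := by
  rw [mem_normalizer_iff_map_conj_eq] at *
  rw [map_commutator, h₁, h₂]

/-- The expansion of `⁅u, ⁅v, w⁆⁆` used here conjugates only by `v` and `⁅u, w⁆`, so `w` itself
need not normalize `H`. -/
theorem commutatorElement_commutatorElement_mem {H K : Subgroup G} (hK : K ≤ normalizer H)
    {u v w : G} (hv : v ∈ K) (huw : ⁅u, w⁆ ∈ K) (huv : ⁅u, v⁆ ∈ H)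
    (huv' : w * ⁅u, v⁻¹⁆ * w⁻¹ ∈ H) (huwv : ⁅⁅u, w⁆, w * v⁻¹ * w⁻¹⁆ ∈ H) :
    ⁅u, ⁅v, w⁆⁆ ∈ H := by
  have key : ⁅u, ⁅v, w⁆⁆ = ⁅u, v⁆ * (v * ((⁅u, w⁆ * (w * ⁅u, v⁻¹⁆ * w⁻¹) * ⁅u, w⁆⁻¹)
      * ⁅⁅u, w⁆, w * v⁻¹ * w⁻¹⁆) * v⁻¹) := by
    simp only [commutatorElement_def]; group
  rw [le_normalizer_iff] at hK
  rw [key]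
  exact mul_mem huv (hK v hv _ (mul_mem (hK _ huw _ huv') huwv))

end Subgroup

section Transvections

variable {n : ℕ} {A : Type*} [CommRing A] {i j k l : Fin n}

theorem coe_elemTransv (h : i ≠ j) (a : A) :
    (elemTransv i j h a : Matrix (Fin n) (Fin n) A) = transvection i j a := rfl

theorem elemTransv_mul_elemTransv (h : i ≠ j) (a b : A) :
    elemTransv i j h a * elemTransv i j h b = elemTransv i j h (a + b) :=
  Subtype.ext (transvection_mul_transvection_same i j h a b)

theorem elemTransv_inv (h : i ≠ j) (a : A) :
    (elemTransv i j h a)⁻¹ = elemTransv i j h (-a) := by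
  refine inv_eq_of_mul_eq_one_right ?_
  rw [elemTransv_mul_elemTransv, add_neg_cancel]
  exact Subtype.ext (transvection_zero i j)

theorem commute_elemTransv (hij : i ≠ j) (hkl : k ≠ l) (hjk : j ≠ k) (hli : l ≠ i) (a b : A) :
    Commute (elemTransv i j hij a) (elemTransv k l hkl b) := by
  refine Subtype.coe_injective (?_ : (_ * _ : Matrix (Fin n) (Fin n) A) = _ * _)
  simp only [coe_elemTransv, transvection, add_mul, mul_add,
    Matrix.one_mul, Matrix.mul_one, single_mul_single_of_ne _ _ _ _ hjk,
    single_mul_single_of_ne _ _ _ _ hli]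
  abel

theorem commutatorElement_elemTransv_elemTransv (hij : i ≠ j) (hjk : j ≠ k) (hik : i ≠ k)
    (a b : A) :
    ⁅elemTransv i j hij a, elemTransv j k hjk b⁆ = elemTransv i k hik (a * b) := by
  simp only [commutatorElement_def, elemTransv_inv]
  refine Subtype.coe_injective (?_ : (_ * _ * _ * _ : Matrix (Fin n) (Fin n) A) = _)
  simp only [coe_elemTransv, transvection, add_mul, mul_add, Matrix.one_mul, Matrix.mul_one,
    single_mul_single_same, single_mul_single_of_ne _ _ _ _ hjk.symm,
    single_mul_single_of_ne _ _ _ _ hik.symm, single_mul_single_of_ne _ _ _ _ hij.symm]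
  simp only [Matrix.zero_mul, add_zero, mul_neg, neg_mul, neg_neg, ← single_neg]
  abel

theorem commutatorElement_elemTransv_elemTransv_of_eq_left (hij : i ≠ j) (hki : k ≠ i)
    (hkj : k ≠ j) (a b : A) :
    ⁅elemTransv i j hij a, elemTransv k i hki b⁆ = elemTransv k j hkj (-(b * a)) := by
  rw [← commutatorElement_inv, commutatorElement_elemTransv_elemTransv hki hij hkj, elemTransv_inv]

theorem commutatorElement_elemTransv_elemTransv_of_ne (hij : i ≠ j) (hkl : k ≠ l) (hjk : j ≠ k)
    (hli : l ≠ i) (a b : A) : ⁅elemTransv i j hij a, elemTransv k l hkl b⁆ = 1 :=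
  commutatorElement_eq_one_iff_commute.mpr (commute_elemTransv hij hkl hjk hli a b)

theorem elemTransv_conj_elemTransv (hij : i ≠ j) (hjk : j ≠ k) (hik : i ≠ k) (a b : A) :
    elemTransv i j hij a * elemTransv j k hjk b * (elemTransv i j hij a)⁻¹
      = elemTransv i k hik (a * b) * elemTransv j k hjk b := by
  rw [← commutatorElement_elemTransv_elemTransv hij hjk hik, commutatorElement_def]
  group

theorem elemTransv_conj_elemTransv_of_eq_left (hij : i ≠ j) (hki : k ≠ i) (hkj : k ≠ j)
    (a b : A) :
    elemTransv i j hij a * elemTransv k i hki b * (elemTransv i j hij a)⁻¹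
      = elemTransv k j hkj (-(b * a)) * elemTransv k i hki b := by
  rw [← commutatorElement_elemTransv_elemTransv_of_eq_left hij hki hkj, commutatorElement_def]
  group

end Transvections

section RelativeElementarySubgroups

variable {n : ℕ} {A : Type*} [CommRing A] {T S : Set A} {i j : Fin n}

theorem elemTransv_mem_transvSet (hij : i ≠ j) {a : A} (ha : a ∈ S) :
    elemTransv i j hij a ∈ transvSet n S :=
  ⟨i, j, hij, a, ha, rfl⟩

theorem elemTransv_mem_esub (hij : i ≠ j) {a : A} (ha : a ∈ S) :
    elemTransv i j hij a ∈ Esub n S :=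
  Subgroup.subset_closure (elemTransv_mem_transvSet hij ha)

theorem elemTransv_mem_relESet (hij : i ≠ j) {a : A} (ha : a ∈ S) :
    elemTransv i j hij a ∈ relESet n T S :=
  Subgroup.subset_closure ⟨1, one_mem _, _, elemTransv_mem_transvSet hij ha, by group⟩

theorem esub_le_normalizer_relESet : Esub n T ≤ Subgroup.normalizer (relESet n T S) := by
  rw [relESet, Subgroup.le_normalizer_closure_iff]
  rintro g hg _ ⟨g', hg', y, hy, rfl⟩
  exact Subgroup.subset_closure ⟨g * g', mul_mem hg hg', y, hy, by group⟩

end RelativeElementarySubgroups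

section Localization

variable {R : Type*} [CommRing R] (s t : R)

def stFrac (a b e : ℕ) (r : R) : Localization.Away (s * t) :=
  Localization.mk (s ^ a * t ^ b * r) ⟨(s * t) ^ e, e, rfl⟩

variable {s t}

theorem stFrac_eq {a b e a' b' e' : ℕ} {r r' : R}
    (h : s ^ a * t ^ b * r * (s * t) ^ e' = s ^ a' * t ^ b' * r' * (s * t) ^ e) :
    stFrac s t a b e r = stFrac s t a' b' e' r' := by
  rw [stFrac, stFrac, Localization.mk_eq_mk_iff, Localization.r_iff_exists]
  exact ⟨1, by simp only [OneMemClass.coe_one, one_mul]; linear_combination h⟩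

theorem stFrac_mul (a b e a' b' e' : ℕ) (r r' : R) :
    stFrac s t a b e r * stFrac s t a' b' e' r'
      = stFrac s t (a + a') (b + b') (e + e') (r * r') := by
  rw [stFrac, stFrac, Localization.mk_mul, stFrac]
  congr 1
  · ring
  · ext; simp [pow_add]

theorem stFrac_neg (a b e : ℕ) (r : R) : stFrac s t a b e (-r) = -stFrac s t a b e r := by
  rw [stFrac, stFrac, Localization.neg_mk, mul_neg]

theorem stFrac_mem_stMulSet (I : Ideal R) {p q a b e : ℕ} {r : R} (hr : r ∈ I)
    (ha : p + e ≤ a) (hb : q + e ≤ b) : stFrac s t a b e r ∈ stMulSet s t p q I := by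
  obtain ⟨a, rfl⟩ := Nat.exists_eq_add_of_le ha
  obtain ⟨b, rfl⟩ := Nat.exists_eq_add_of_le hb
  refine ⟨s ^ a * t ^ b * r, I.mul_mem_left _ hr, ?_⟩
  rw [← Localization.mk_one_eq_algebraMap, stFrac, Localization.mk_eq_mk_iff,
    Localization.r_iff_exists]
  exact ⟨1, by simp only [OneMemClass.coe_one, one_mul]; ring⟩

theorem stFrac_mem_stMulSet_univ {p q a b e : ℕ} (r : R) (ha : p + e ≤ a) (hb : q + e ≤ b) :
    stFrac s t a b e r ∈ stMulSet s t p q Set.univ := by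
  simpa using stFrac_mem_stMulSet ⊤ (Submodule.mem_top (x := r)) ha hb

theorem neg_mem_stMulSet (I : Ideal R) {p q : ℕ} {x : Localization.Away (s * t)}
    (hx : x ∈ stMulSet s t p q I) : -x ∈ stMulSet s t p q I := by
  obtain ⟨c, hc, rfl⟩ := hx
  exact ⟨-c, I.neg_mem hc, by rw [mul_neg, map_neg]⟩

theorem stMulSet_subset_stMulSet {I J : Ideal R} {p q p' q' : ℕ} (hIJ : I ≤ J) (hp : p ≤ p')
    (hq : q ≤ q') : stMulSet s t p' q' I ⊆ stMulSet s t p q J := by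
  obtain ⟨p', rfl⟩ := Nat.exists_eq_add_of_le hp
  obtain ⟨q', rfl⟩ := Nat.exists_eq_add_of_le hq
  rintro _ ⟨c, hc, rfl⟩
  exact ⟨s ^ p' * t ^ q' * c, J.mul_mem_left _ (hIJ hc), by ring_nf⟩

end Localization

section LevelCommutator

variable {R : Type*} [CommRing R] {n : ℕ} {s t : R} {p q : ℕ} {𝔞 𝔟 : Ideal R}

variable (n s t p q 𝔞 𝔟) in
def levelCommutator : Subgroup (SL n (Localization.Away (s * t))) :=
  ⁅relESet n (stMulSet s t p q Set.univ) (stMulSet s t p q 𝔞),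
    relESet n (stMulSet s t p q Set.univ) (stMulSet s t p q 𝔟)⁆

theorem esub_le_normalizer_levelCommutator :
    Esub n (stMulSet s t p q Set.univ) ≤ Subgroup.normalizer (levelCommutator n s t p q 𝔞 𝔟) :=
  fun _ hg ↦ Subgroup.mem_normalizer_commutator (esub_le_normalizer_relESet hg)
    (esub_le_normalizer_relESet hg)

theorem transvSet_subset_levelCommutator (hn : 3 ≤ n) :
    transvSet n (stMulSet s t (2 * p) (2 * q) (𝔞 * 𝔟 : Ideal R))
      ⊆ levelCommutator n s t p q 𝔞 𝔟 := by
  rintro _ ⟨i, j, hij, _, ⟨d, hd, rfl⟩, rfl⟩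
  obtain ⟨g, hgi, hgj⟩ := Fin.exists_ne_and_ne_of_two_lt i j hn
  refine Submodule.mul_induction_on hd (fun x hx y hy ↦ ?_) (fun d d' hd hd' ↦ ?_)
  · have hsplit : s ^ (2 * p) * t ^ (2 * q) * (x * y)
        = s ^ p * t ^ q * x * (s ^ p * t ^ q * y) := by ring
    rw [hsplit, map_mul, ← commutatorElement_elemTransv_elemTransv hgi.symm hgj]
    exact Subgroup.commutator_mem_commutator (elemTransv_mem_relESet _ ⟨x, hx, rfl⟩)
      (elemTransv_mem_relESet _ ⟨y, hy, rfl⟩)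
  · rw [mul_add, map_add, ← elemTransv_mul_elemTransv]
    exact mul_mem hd hd'

theorem commutatorElement_elemTransv_mem_levelCommutator (hn : 3 ≤ n)
    {α β : Localization.Away (s * t)} (hαβ : α * β ∈ stMulSet s t (2 * p) (2 * q) (𝔞 * 𝔟 : Ideal R))
    {i j i' j' : Fin n} (hij : i ≠ j) (hij' : i' ≠ j') (h : ¬(i' = j ∧ j' = i)) :
    ⁅elemTransv i j hij α, elemTransv i' j' hij' β⁆ ∈ levelCommutator n s t p q 𝔞 𝔟 := by
  by_cases hi' : i' = j
  · subst hi'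
    have hij'' : i ≠ j' := fun h' ↦ h ⟨rfl, h'.symm⟩
    rw [commutatorElement_elemTransv_elemTransv hij hij' hij'']
    exact transvSet_subset_levelCommutator hn (elemTransv_mem_transvSet _ hαβ)
  by_cases hj' : j' = i
  · subst hj'
    rw [commutatorElement_elemTransv_elemTransv_of_eq_left hij hij' hi', mul_comm β]
    exact transvSet_subset_levelCommutator hn (elemTransv_mem_transvSet _ (neg_mem_stMulSet _ hαβ))
  rw [commutatorElement_elemTransv_elemTransv_of_ne hij hij' (Ne.symm hi') hj']
  exact one_mem _

theorem conj_commutatorElement_elemTransv_mem_levelCommutator {i j g : Fin n} (hij : i ≠ j)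
    (hgi : g ≠ i) (hgj : g ≠ j) {a b c : Localization.Away (s * t)}
    (ha : a ∈ stMulSet s t p q 𝔞) (hb : b ∈ stMulSet s t p q 𝔟)
    (hca : c * a ∈ stMulSet s t p q 𝔞) (hbc : b * c ∈ stMulSet s t p q 𝔟) :
    elemTransv g i hgi c * ⁅elemTransv i j hij a, elemTransv j g hgj.symm b⁆
      * (elemTransv g i hgi c)⁻¹ ∈ levelCommutator n s t p q 𝔞 𝔟 := by
  rw [conjugate_commutatorElement, elemTransv_conj_elemTransv hgi hij hgj,
    elemTransv_conj_elemTransv_of_eq_left hgi hgj.symm hij.symm]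
  exact Subgroup.commutator_mem_commutator
    (mul_mem (elemTransv_mem_relESet _ hca) (elemTransv_mem_relESet _ ha))
    (mul_mem (elemTransv_mem_relESet _ (neg_mem_stMulSet _ hbc)) (elemTransv_mem_relESet _ hb))

theorem commutatorElement_elemTransv_mul_mem_levelCommutator (hn : 3 ≤ n) {i j g : Fin n}
    (hij : i ≠ j) (hgi : g ≠ i) (hgj : g ≠ j) {a b c : Localization.Away (s * t)}
    (ha : a ∈ stMulSet s t p q 𝔞) (hc : c ∈ stMulSet s t p q 𝔟)
    (hab : a * b ∈ stMulSet s t (2 * p) (2 * q) (𝔞 * 𝔟 : Ideal R)) :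
    ⁅elemTransv g j hgj a, elemTransv j i hij.symm b * elemTransv j g hgj.symm c⁆
      ∈ levelCommutator n s t p q 𝔞 𝔟 := by
  have hab' : a * b ∈ stMulSet s t p q 𝔞 :=
    stMulSet_subset_stMulSet Ideal.mul_le_left (by omega) (by omega) hab
  rw [commutatorElement_mul_right_of_commute (commute_elemTransv hij.symm hgj.symm hij hgj _ _),
    commutatorElement_elemTransv_elemTransv hgj hij.symm hgi,
    elemTransv_conj_elemTransv_of_eq_left hij.symm hgj hgi]
  exact mul_mem (transvSet_subset_levelCommutator hn (elemTransv_mem_transvSet _ hab))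
    (Subgroup.commutator_mem_commutator
      (mul_mem (elemTransv_mem_relESet _ (neg_mem_stMulSet _ hab')) (elemTransv_mem_relESet _ ha))
      (elemTransv_mem_relESet _ hc))

theorem commutatorElement_elemTransv_swap_mem_levelCommutator (hn : 3 ≤ n) (k m : ℕ)
    {x y : R} (hx : x ∈ 𝔞) (hy : y ∈ 𝔟) {i j : Fin n} (hij : i ≠ j) (hji : j ≠ i) :
    ⁅elemTransv i j hij (stFrac s t 0 (3 * q + 2 * m + k) k x),
      elemTransv j i hji (stFrac s t (2 * k + 4 * p + m) 0 m y)⁆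
      ∈ levelCommutator n s t p q 𝔞 𝔟 := by
  obtain ⟨g, hgi, hgj⟩ := Fin.exists_ne_and_ne_of_two_lt i j hn
  set u := elemTransv i j hij (stFrac s t 0 (3 * q + 2 * m + k) k x)
  set v := elemTransv j g hgj.symm (stFrac s t (k + 2 * p) q 0 y)
  set w := elemTransv g i hgi (stFrac s t (k + 2 * p + q + m) 0 (q + m) 1)
  have hz : elemTransv j i hji (stFrac s t (2 * k + 4 * p + m) 0 m y) = ⁅v, w⁆ := by
    rw [commutatorElement_elemTransv_elemTransv _ _ hji, stFrac_mul]
    exact congrArg _ (stFrac_eq (by ring))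
  have hv : v⁻¹ = elemTransv j g hgj.symm (stFrac s t (k + 2 * p) q 0 (-y)) := by
    rw [elemTransv_inv, stFrac_neg]
  have huw : ⁅u, w⁆ = elemTransv g j hgj
      (stFrac s t (k + 2 * p + q + m) (3 * q + 2 * m + k) (q + m + k) (-x)) := by
    rw [commutatorElement_elemTransv_elemTransv_of_eq_left hij hgi hgj, stFrac_mul, ← stFrac_neg,
      one_mul, add_zero, zero_add]
  rw [hz]
  refine Subgroup.commutatorElement_commutatorElement_mem esub_le_normalizer_levelCommutator
    (elemTransv_mem_esub _ (stFrac_mem_stMulSet_univ _ (by omega) (by omega)))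
    (huw ▸ elemTransv_mem_esub _ (stFrac_mem_stMulSet_univ _ (by omega) (by omega))) ?_ ?_ ?_
  · rw [commutatorElement_elemTransv_elemTransv hij hgj.symm hgi.symm, stFrac_mul]
    exact transvSet_subset_levelCommutator hn (elemTransv_mem_transvSet _
      (stFrac_mem_stMulSet _ (Ideal.mul_mem_mul hx hy) (by omega) (by omega)))
  · have hsplit : stFrac s t 0 (3 * q + 2 * m + k) k x * stFrac s t (k + 2 * p) q 0 (-y)
        = stFrac s t p (2 * q + m) 0 (-x) * stFrac s t p (2 * q + m) 0 y :=
      (stFrac_mul ..).trans (stFrac_eq (by ring)) |>.trans (stFrac_mul ..).symm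
    rw [hv, commutatorElement_elemTransv_elemTransv hij hgj.symm hgi.symm, hsplit,
      ← commutatorElement_elemTransv_elemTransv hij hgj.symm hgi.symm]
    refine conj_commutatorElement_elemTransv_mem_levelCommutator hij hgi hgj
      (stFrac_mem_stMulSet _ (neg_mem hx) (by omega) (by omega))
      (stFrac_mem_stMulSet _ hy (by omega) (by omega)) ?_ ?_ <;> rw [stFrac_mul]
    · exact stFrac_mem_stMulSet _ (𝔞.mul_mem_left _ (neg_mem hx)) (by omega) (by omega)
    · exact stFrac_mem_stMulSet _ (𝔟.mul_mem_right _ hy) (by omega) (by omega)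
  · rw [huw, hv, elemTransv_conj_elemTransv_of_eq_left hgi hgj.symm hji]
    refine commutatorElement_elemTransv_mul_mem_levelCommutator hn hij hgi hgj
      (stFrac_mem_stMulSet _ (neg_mem hx) (by omega) (by omega))
      (stFrac_mem_stMulSet _ (neg_mem hy) (by omega) (by omega)) ?_
    simp only [stFrac_mul, ← stFrac_neg, mul_one, neg_neg, neg_mul]
    exact stFrac_mem_stMulSet _ (neg_mem (Ideal.mul_mem_mul hx hy)) (by omega) (by omega)

end LevelCommutator

/-- Base of induction of the relative commutator calculus (type `A_{n-1}`):
given `p, q, k, m` there exist `l, n'` (independent of the ideals) such that for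
all ideals `𝔞, 𝔟 ⊴ R`, all `a ∈ 𝔞`, `b ∈ 𝔟` and all index pairs, the commutator
`[e_{ij}(F(t^l·a)·F(s)^{-k}), e_{i'j'}(F(s^{n'}·b)·F(t)^{-m})]` lies in
`⁅E(n,s^pt^qR,s^pt^q𝔞), E(n,s^pt^qR,s^pt^q𝔟)⁆` inside `SL(n,R_{st})`.
Here `F(t^l·a)·F(s)^{-k} = Localization.mk (t^l·a·t^k) ⟨(s·t)^k, _⟩` and
`F(s^{n'}·b)·F(t)^{-m} = Localization.mk (s^{n'}·b·s^m) ⟨(s·t)^m, _⟩`. -/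
theorem exists_commutator_calculus_base
    {R : Type*} [CommRing R] (n : ℕ) (hn : 3 ≤ n) (s t : R) (p q k m : ℕ) :
    ∃ l n' : ℕ, ∀ a b : Ideal R, ∀ x ∈ a, ∀ y ∈ b,
      ∀ i j : Fin n, ∀ hij : i ≠ j, ∀ i' j' : Fin n, ∀ hij' : i' ≠ j',
        ⁅elemTransv i j hij
            (Localization.mk (t ^ l * x * t ^ k) (⟨(s * t) ^ k, k, rfl⟩ : Submonoid.powers (s * t))),
          elemTransv i' j' hij'
            (Localization.mk (s ^ n' * y * s ^ m) (⟨(s * t) ^ m, m, rfl⟩ : Submonoid.powers (s * t)))⁆ ∈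
          ⁅relESet n (stMulSet s t p q (Set.univ : Set R))
              (stMulSet s t p q (a : Set R)),
            relESet n (stMulSet s t p q (Set.univ : Set R))
              (stMulSet s t p q (b : Set R))⁆ := by
  refine ⟨3 * q + 2 * m, 2 * k + 4 * p, fun 𝔞 𝔟 x hx y hy i j hij i' j' hij' ↦ ?_⟩
  have hα : Localization.mk (t ^ (3 * q + 2 * m) * x * t ^ k)
      (⟨(s * t) ^ k, k, rfl⟩ : Submonoid.powers (s * t))
      = stFrac s t 0 (3 * q + 2 * m + k) k x := by
    rw [stFrac]; congr 1; ring
  have hβ : Localization.mk (s ^ (2 * k + 4 * p) * y * s ^ m)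
      (⟨(s * t) ^ m, m, rfl⟩ : Submonoid.powers (s * t))
      = stFrac s t (2 * k + 4 * p + m) 0 m y := by
    rw [stFrac]; congr 1; ring
  rw [hα, hβ]
  by_cases h : i' = j ∧ j' = i
  · obtain ⟨rfl, rfl⟩ := h
    exact commutatorElement_elemTransv_swap_mem_levelCommutator hn k m hx hy hij hij'
  · refine commutatorElement_elemTransv_mem_levelCommutator hn ?_ hij hij' h
    rw [stFrac_mul]
    exact stFrac_mem_stMulSet _ (Ideal.mul_mem_mul hx hy) (by omega) (by omega)
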